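/- Let W be an n×n real matrix, T a positive integer, and let y : {1,...,T} → [-1,1] be any function. Suppose σ_max(W) ≤ T/2. Then for any T₀ < T and any nonzero g ∈ ℝ^n, e^{-2σ_max(W)}·‖g‖ ≤ ‖(∏_{t=T₀+1}^{T} (I + (y(t)/T)·W))ᵀ g‖ ≤ e^{σ_max(W)}·‖g‖. -/

import Mathlib

/-!
Each factor of the product `P` is `1 + c • Wᵀ` with `|c| ≤ 1/T`, so it is a perturbation of the
identity of size `ε = σ_max(W)/T ≤ 1/2`, and it stretches every vector by a factor in
`[1 - ε, 1 + ε]`. Over at most `T` factors this gives `(1 - ε)^T ≤ ‖Pᵀ g‖/‖g‖ ≤ (1 + ε)^T`, and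
`1 + ε ≤ exp ε`, `exp (-2ε) ≤ 1 - ε` (valid for `ε ≤ 1/2`) turn these into `exp (-2σ)` and `exp σ`.
-/

/-- Largest singular value (ℓ²-operator norm) of a real square matrix. -/
noncomputable def sigmaMax {n : ℕ} (A : Matrix (Fin n) (Fin n) ℝ) : ℝ :=
  ‖(Matrix.toEuclideanCLM (𝕜 := ℝ) A : EuclideanSpace ℝ (Fin n) →L[ℝ] EuclideanSpace ℝ (Fin n))‖

/-- The ordered matrix product `∏_{t=a+1}^{b} (I + (y t / T) • W)` with later
indices applied on the left. -/
noncomputable def fruProd {n : ℕ} (y : ℕ → ℝ) (T : ℕ)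
    (W : Matrix (Fin n) (Fin n) ℝ) (a b : ℕ) : Matrix (Fin n) (Fin n) ℝ :=
  ((List.range (b - a)).map
    (fun i => (1 : Matrix (Fin n) (Fin n) ℝ) + (y (b - i) / T) • W)).prod

namespace Real

theorem exp_neg_two_mul_le_one_sub {u : ℝ} (hu₀ : 0 ≤ u) (hu : u ≤ 1 / 2) :
    exp (-2 * u) ≤ 1 - u := by
  have hpos : 0 < 1 + 2 * u := by linarith
  calc exp (-2 * u) = (exp (2 * u))⁻¹ := by rw [← exp_neg, neg_mul]
    _ ≤ (1 + 2 * u)⁻¹ := by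
        gcongr
        linarith [add_one_le_exp (2 * u)]
    _ ≤ 1 - u := by
        rw [inv_le_iff_one_le_mul₀ hpos]
        nlinarith

theorem exp_neg_two_mul_le_one_sub_pow {u s : ℝ} {k : ℕ} (hu₀ : 0 ≤ u) (hu : u ≤ 1 / 2)
    (hk : k * u ≤ s) : exp (-2 * s) ≤ (1 - u) ^ k :=
  calc exp (-2 * s) ≤ exp (k * (-2 * u)) := exp_le_exp.mpr (by linarith)
    _ = exp (-2 * u) ^ k := exp_nat_mul _ k
    _ ≤ (1 - u) ^ k := by gcongr; exact exp_neg_two_mul_le_one_sub hu₀ hu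

theorem one_add_pow_le_exp {u s : ℝ} {k : ℕ} (hu₀ : 0 ≤ u) (hk : k * u ≤ s) :
    (1 + u) ^ k ≤ exp s :=
  calc (1 + u) ^ k ≤ exp u ^ k := by
        gcongr
        linarith [add_one_le_exp u]
    _ = exp (k * u) := (exp_nat_mul u k).symm
    _ ≤ exp s := exp_le_exp.mpr hk

end Real

section PerturbedIdentity

variable {𝕜 E : Type*} [NontriviallyNormedField 𝕜] [SeminormedAddCommGroup E] [NormedSpace 𝕜 E]
  {ε : ℝ}

theorem ContinuousLinearMap.norm_apply_le_of_norm_sub_one_le {f : E →L[𝕜] E}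
    (hf : ‖f - 1‖ ≤ ε) (x : E) : ‖f x‖ ≤ (1 + ε) * ‖x‖ := by
  have hx : ‖(f - 1) x‖ ≤ ε * ‖x‖ :=
    ((f - 1).le_opNorm x).trans (mul_le_mul_of_nonneg_right hf (norm_nonneg x))
  calc ‖f x‖ = ‖x + (f - 1) x‖ := by simp
    _ ≤ ‖x‖ + ‖(f - 1) x‖ := norm_add_le _ _
    _ ≤ (1 + ε) * ‖x‖ := by linarith

theorem ContinuousLinearMap.le_norm_apply_of_norm_sub_one_le {f : E →L[𝕜] E}
    (hf : ‖f - 1‖ ≤ ε) (x : E) : (1 - ε) * ‖x‖ ≤ ‖f x‖ := by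
  have hx : ‖(f - 1) x‖ ≤ ε * ‖x‖ :=
    ((f - 1).le_opNorm x).trans (mul_le_mul_of_nonneg_right hf (norm_nonneg x))
  have hx' : ‖x‖ ≤ ‖f x‖ + ‖(f - 1) x‖ :=
    calc ‖x‖ = ‖f x - (f - 1) x‖ := by simp
      _ ≤ ‖f x‖ + ‖(f - 1) x‖ := norm_sub_le _ _
  linarith

theorem List.norm_prod_apply_le_of_norm_sub_one_le {l : List (E →L[𝕜] E)}
    (hl : ∀ f ∈ l, ‖f - 1‖ ≤ ε) (x : E) : ‖l.prod x‖ ≤ (1 + ε) ^ l.length * ‖x‖ := by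
  induction l with
  | nil => simp
  | cons f l ih =>
    have hf : ‖f - 1‖ ≤ ε := hl f List.mem_cons_self
    have hε : 0 ≤ 1 + ε := by linarith [norm_nonneg (f - 1)]
    calc ‖(f :: l).prod x‖ = ‖f (l.prod x)‖ := rfl
      _ ≤ (1 + ε) * ‖l.prod x‖ := f.norm_apply_le_of_norm_sub_one_le hf _
      _ ≤ (1 + ε) * ((1 + ε) ^ l.length * ‖x‖) := by
          gcongr
          exact ih fun g hg => hl g (List.mem_cons_of_mem _ hg)
      _ = (1 + ε) ^ (f :: l).length * ‖x‖ := by rw [List.length_cons, pow_succ]; ring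

theorem List.le_norm_prod_apply_of_norm_sub_one_le {l : List (E →L[𝕜] E)} (hε : ε ≤ 1)
    (hl : ∀ f ∈ l, ‖f - 1‖ ≤ ε) (x : E) : (1 - ε) ^ l.length * ‖x‖ ≤ ‖l.prod x‖ := by
  induction l with
  | nil => simp
  | cons f l ih =>
    calc (1 - ε) ^ (f :: l).length * ‖x‖ = (1 - ε) * ((1 - ε) ^ l.length * ‖x‖) := by
          rw [List.length_cons, pow_succ]; ring
      _ ≤ (1 - ε) * ‖l.prod x‖ :=
          mul_le_mul_of_nonneg_left (ih fun g hg => hl g (List.mem_cons_of_mem _ hg))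
            (by linarith)
      _ ≤ ‖f (l.prod x)‖ := f.le_norm_apply_of_norm_sub_one_le (hl f List.mem_cons_self) _
      _ = ‖(f :: l).prod x‖ := rfl

end PerturbedIdentity

open scoped Matrix

theorem sigmaMax_transpose {n : ℕ} (A : Matrix (Fin n) (Fin n) ℝ) : sigmaMax Aᵀ = sigmaMax A := by
  rw [sigmaMax, sigmaMax, ← Matrix.conjTranspose_eq_transpose_of_trivial,
    ← Matrix.star_eq_conjTranspose, map_star, ContinuousLinearMap.star_eq_adjoint, ContinuousLinearMap.adjoint.norm_map]

theorem toEuclideanCLM_fruProd_transpose {n : ℕ} (y : ℕ → ℝ) (T : ℕ)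
    (W : Matrix (Fin n) (Fin n) ℝ) (a b : ℕ) :
    Matrix.toEuclideanCLM (𝕜 := ℝ) (fruProd y T W a b)ᵀ =
      ((List.range (b - a)).reverse.map
        fun i => 1 + (y (b - i) / T) • Matrix.toEuclideanCLM (𝕜 := ℝ) Wᵀ).prod := by
  simp [fruProd, Matrix.transpose_list_prod, map_list_prod, List.map_reverse, Function.comp_def]

theorem norm_one_add_div_smul_transpose_sub_one_le {n : ℕ} (W : Matrix (Fin n) (Fin n) ℝ)
    (T : ℕ) {c : ℝ} (hc : |c| ≤ 1) :
    ‖1 + (c / T) • Matrix.toEuclideanCLM (𝕜 := ℝ) Wᵀ - 1‖ ≤ sigmaMax W / T := by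
  rw [add_sub_cancel_left, norm_smul, Real.norm_eq_abs, abs_div, Nat.abs_cast]
  calc |c| / T * ‖Matrix.toEuclideanCLM (𝕜 := ℝ) Wᵀ‖ ≤ 1 / T * sigmaMax W := by
        gcongr; exact (sigmaMax_transpose W).le
    _ = sigmaMax W / T := by ring

theorem Nat.cast_mul_div_le_of_le {k N : ℕ} (hk : k ≤ N) {s : ℝ} (hs : 0 ≤ s) :
    (k : ℝ) * (s / N) ≤ s :=
  calc (k : ℝ) * (s / N) ≤ N * (s / N) := by gcongr
    _ ≤ s := by rw [mul_div_left_comm]; exact mul_le_of_le_one_right hs (div_self_le_one _)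

theorem generalized_fru_gradient_bound_general {n : ℕ}
    (W : Matrix (Fin n) (Fin n) ℝ) (T : ℕ)
    (y : ℕ → ℝ) (hy : ∀ t ∈ Finset.Icc 1 T, y t ∈ Set.Icc (-1:ℝ) 1)
    (hW : sigmaMax W ≤ T / 2) (T₀ : ℕ)
    (g : EuclideanSpace ℝ (Fin n)) :
    Real.exp (-2 * sigmaMax W) * ‖g‖
        ≤ ‖(Matrix.toEuclideanCLM (𝕜 := ℝ) (fruProd y T W T₀ T).transpose) g‖ ∧
    ‖(Matrix.toEuclideanCLM (𝕜 := ℝ) (fruProd y T W T₀ T).transpose) g‖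
        ≤ Real.exp (sigmaMax W) * ‖g‖ := by
  set s := sigmaMax W
  have hs : 0 ≤ s := norm_nonneg _
  have hε₀ : 0 ≤ s / T := by positivity
  have hε : s / T ≤ 1 / 2 := div_le_of_le_mul₀ T.cast_nonneg (by norm_num) (by linarith)
  have hk : ((T - T₀ : ℕ) : ℝ) * (s / T) ≤ s := Nat.cast_mul_div_le_of_le (T.sub_le T₀) hs
  have hfactor : ∀ f ∈ (List.range (T - T₀)).reverse.map
      (fun i => 1 + (y (T - i) / T) • Matrix.toEuclideanCLM (𝕜 := ℝ) Wᵀ), ‖f - 1‖ ≤ s / T := by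
    simp only [List.mem_map, List.mem_reverse, List.mem_range]
    rintro _ ⟨i, hi, rfl⟩
    exact norm_one_add_div_smul_transpose_sub_one_le W T
      (abs_le.mpr (hy (T - i) (Finset.mem_Icc.mpr ⟨by omega, by omega⟩)))
  rw [toEuclideanCLM_fruProd_transpose]
  constructor
  · refine le_trans ?_ (List.le_norm_prod_apply_of_norm_sub_one_le (by linarith) hfactor g)
    gcongr
    simpa using Real.exp_neg_two_mul_le_one_sub_pow hε₀ hε hk
  · refine (List.norm_prod_apply_le_of_norm_sub_one_le hfactor g).trans ?_
    gcongr
    simpa using Real.one_add_pow_le_exp hε₀ hk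

theorem generalized_fru_gradient_bound {n : ℕ}
    (W : Matrix (Fin n) (Fin n) ℝ) (T : ℕ) (hT : 0 < T)
    (y : ℕ → ℝ) (hy : ∀ t ∈ Finset.Icc 1 T, y t ∈ Set.Icc (-1:ℝ) 1)
    (hW : sigmaMax W ≤ T / 2) (T₀ : ℕ) (hT₀ : T₀ < T)
    (g : EuclideanSpace ℝ (Fin n)) (hg : g ≠ 0) :
    Real.exp (-2 * sigmaMax W) * ‖g‖
        ≤ ‖(Matrix.toEuclideanCLM (𝕜 := ℝ) (fruProd y T W T₀ T).transpose) g‖ ∧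
    ‖(Matrix.toEuclideanCLM (𝕜 := ℝ) (fruProd y T W T₀ T).transpose) g‖
        ≤ Real.exp (sigmaMax W) * ‖g‖ :=
  generalized_fru_gradient_bound_general W T y hy hW T₀ g
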